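/- arXiv:2109.11652 — 2 statements merged into one kernel-verified Lean document; each statement's English description precedes it below -/
import Mathlib

section
/- For every linear order b with domain a subset of ℕ, the order b embeds into the Kleene–Brouwer ordering of the tree of finite strictly descending sequences through b. -/
/-!
Send `x` to the list of record lows of `{m | ¬ r m x}` scanned in the natural order of ℕ, i.e.
the elements that are `r`-below every earlier element of that set. Each record low is `r`-below
the previous ones, so the list is `r`-descending; `x` itself is the last one. For `r x y` the
scans for `x` and `y` agree up to their first disagreement, and there `x` has a record low that
`y` lacks: a record low of `y` that is not one of `x` is preceded by a record low of `x` that is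
`r`-below it, hence not in `{m | ¬ r m y}`. All later entries of the list for `y` are larger
naturals, which is exactly `x`'s list coming first in the Kleene–Brouwer order.
-/

/-- Kleene–Brouwer ordering on finite sequences of elements of a subset of ℕ,
comparing entries as natural numbers. -/
def KBS (S : Set ℕ) (s t : List ↥S) : Prop :=
  ∃ n : ℕ, s.take n = t.take n ∧
    ((n = t.length ∧ n < s.length) ∨
      ∃ (h1 : n < s.length) (h2 : n < t.length),
        (s.get ⟨n, h1⟩ : ℕ) < (t.get ⟨n, h2⟩ : ℕ))

namespace KBS

variable {S : Set ℕ} {s t : List ↥S}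

theorem cons_cons (c : ↥S) (h : KBS S s t) : KBS S (c :: s) (c :: t) := by
  obtain ⟨n, htake, hcmp⟩ := h
  refine ⟨n + 1, by simp [htake], ?_⟩
  rcases hcmp with ⟨hn, hlt⟩ | ⟨h1, h2, hlt⟩
  · exact Or.inl ⟨by simp [hn], by simpa using hlt⟩
  · exact Or.inr ⟨by simpa using h1, by simpa using h2, by simpa using hlt⟩

theorem cons_of_forall_lt {c : ↥S} (h : ∀ d ∈ t, c < d) : KBS S (c :: s) t := by
  refine ⟨0, rfl, ?_⟩
  cases t with
  | nil => exact Or.inl ⟨rfl, by simp⟩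
  | cons d t => exact Or.inr ⟨by simp, by simp, by simpa using h d (by simp)⟩

/-- If `p` and `q` differ somewhere on an increasing list and `p` holds at the first place
where they differ, the `p`-filtered list precedes the `q`-filtered one. -/
theorem filter_filter {L : List ↥S} (hL : L.Pairwise (· < ·)) {p q : ↥S → Prop}
    [DecidablePred p] [DecidablePred q] (hdiff : ∃ a ∈ L, p a ∧ ¬ q a)
    (hfirst : ∀ a ∈ L, q a → ¬ p a → ∃ b ∈ L, b < a ∧ p b ∧ ¬ q b) :
    KBS S (L.filter (p ·)) (L.filter (q ·)) := by
  induction L with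
  | nil => simp at hdiff
  | cons c L ih =>
    obtain ⟨hc, hL⟩ := List.pairwise_cons.1 hL
    by_cases hpq : p c ↔ q c
    · have hdiff' : ∃ a ∈ L, p a ∧ ¬ q a := by
        obtain ⟨a, ha, hpa, hqa⟩ := hdiff
        rcases List.mem_cons.1 ha with rfl | ha
        · exact absurd (hpq.1 hpa) hqa
        · exact ⟨a, ha, hpa, hqa⟩
      have hfirst' : ∀ a ∈ L, q a → ¬ p a → ∃ b ∈ L, b < a ∧ p b ∧ ¬ q b := by
        intro a ha hqa hpa
        obtain ⟨b, hb, hba, hpb, hqb⟩ := hfirst a (List.mem_cons_of_mem c ha) hqa hpa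
        rcases List.mem_cons.1 hb with rfl | hb
        · exact absurd (hpq.1 hpb) hqb
        · exact ⟨b, hb, hba, hpb, hqb⟩
      have ih' := ih hL hdiff' hfirst'
      by_cases hpc : p c
      · rw [List.filter_cons_of_pos (by simpa using hpc),
          List.filter_cons_of_pos (by simpa using hpq.1 hpc)]
        exact ih'.cons_cons c
      · rw [List.filter_cons_of_neg (by simpa using hpc),
          List.filter_cons_of_neg (by simpa [hpq] using hpc)]
        exact ih'
    · have hpc : p c ∧ ¬ q c := by
        by_contra hpc
        obtain ⟨b, hb, hbc, -⟩ := hfirst c (List.mem_cons_self ..) (by tauto) (by tauto)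
        rcases List.mem_cons.1 hb with rfl | hb
        · exact lt_irrefl b hbc
        · exact lt_asymm hbc (hc b hb)
      rw [List.filter_cons_of_pos (by simpa using hpc.1),
        List.filter_cons_of_neg (by simpa using hpc.2)]
      exact cons_of_forall_lt fun d hd => hc d (List.mem_filter.1 hd).1

end KBS

open Classical in
noncomputable def enumBelow (S : Set ℕ) (N : ℕ) : List ↥S :=
  (List.range N).filterMap fun n => if h : n ∈ S then some ⟨n, h⟩ else none

section EnumBelow

variable {S : Set ℕ}

@[simp]
theorem mem_enumBelow {a : ↥S} {N : ℕ} : a ∈ enumBelow S N ↔ (a : ℕ) < N := by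
  simp [enumBelow, List.mem_filterMap]

theorem pairwise_lt_enumBelow (S : Set ℕ) (N : ℕ) : (enumBelow S N).Pairwise (· < ·) := by
  refine List.pairwise_filterMap.2 (List.pairwise_lt_range.imp ?_)
  intro m n hmn a ha b hb
  split_ifs at ha hb
  cases ha; cases hb
  exact hmn

end EnumBelow

section RecordLow

variable {S : Set ℕ} (r : ↥S → ↥S → Prop)

def IsRecordLow (A : Set ↥S) (a : ↥S) : Prop :=
  a ∈ A ∧ ∀ m ∈ A, m < a → r a m

open Classical in
noncomputable def recordLows (A : Set ↥S) (N : ℕ) : List ↥S :=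
  (enumBelow S N).filter (IsRecordLow r A ·)

variable {r}

theorem mem_recordLows {A : Set ↥S} {N : ℕ} {a : ↥S} :
    a ∈ recordLows r A N ↔ (a : ℕ) < N ∧ IsRecordLow r A a := by
  simp [recordLows]

theorem pairwise_recordLows (A : Set ↥S) (N : ℕ) :
    (recordLows r A N).Pairwise (fun a b => r b a) :=
  ((pairwise_lt_enumBelow S N).sublist List.filter_sublist).imp_of_mem fun ha hb hab =>
    (mem_recordLows.1 hb).2.2 _ (mem_recordLows.1 ha).2.1 hab

theorem recordLows_eq_of_le {A : Set ↥S} {M N : ℕ} (hMN : M ≤ N)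
    (hA : ∀ a, IsRecordLow r A a → (a : ℕ) < M) : recordLows r A N = recordLows r A M :=
  List.Pairwise.eq_of_mem_iff
    ((pairwise_lt_enumBelow S N).sublist List.filter_sublist)
    ((pairwise_lt_enumBelow S M).sublist List.filter_sublist)
    fun a => by
      simp only [mem_recordLows]
      exact ⟨fun h => ⟨hA a h.2, h.2⟩, fun h => ⟨h.1.trans_le hMN, h.2⟩⟩

theorem exists_isRecordLow_le [IsTrans ↥S r] [Std.Trichotomous r] {A : Set ↥S} {m : ↥S}
    (hm : m ∈ A) : ∃ c, IsRecordLow r A c ∧ (c = m ∨ c < m ∧ r c m) := by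
  induction m using WellFoundedLT.induction with
  | _ m ih =>
  by_cases hrec : IsRecordLow r A m
  · exact ⟨m, hrec, Or.inl rfl⟩
  obtain ⟨m', hm', hm'm, hnot⟩ : ∃ m' ∈ A, m' < m ∧ ¬ r m m' := by
    simpa [IsRecordLow, hm] using hrec
  have hrm' : r m' m := by
    rcases trichotomous_of r m' m with h | rfl | h
    · exact h
    · exact absurd hm'm (lt_irrefl _)
    · exact absurd h hnot
  obtain ⟨c, hc, rfl | ⟨hcm', hrc⟩⟩ := ih m' hm'm hm'
  · exact ⟨c, hc, Or.inr ⟨hm'm, hrm'⟩⟩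
  · exact ⟨c, hc, Or.inr ⟨hcm'.trans hm'm, trans_of r hrc hrm'⟩⟩

theorem isRecordLow_self [Std.Irrefl r] [Std.Trichotomous r] (x : ↥S) :
    IsRecordLow r {m | ¬ r m x} x := by
  refine ⟨irrefl x, fun m hm hmx => ?_⟩
  rcases trichotomous_of r x m with h | rfl | h
  · exact h
  · exact absurd hmx (lt_irrefl _)
  · exact absurd h hm

theorem IsRecordLow.le [Std.Irrefl r] {x a : ↥S}
    (ha : IsRecordLow r {m | ¬ r m x} a) : a ≤ x :=
  not_lt.1 fun hxa => ha.1 (ha.2 x (irrefl x) hxa)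

theorem exists_isRecordLow_lt_of_lt [IsStrictOrder ↥S r] [Std.Trichotomous r] {x y a : ↥S}
    (hxy : r x y) (hy : IsRecordLow r {m | ¬ r m y} a) (hx : ¬ IsRecordLow r {m | ¬ r m x} a) :
    ∃ c < a, IsRecordLow r {m | ¬ r m x} c ∧ ¬ IsRecordLow r {m | ¬ r m y} c := by
  have hax : ¬ r a x := fun hax => hy.1 (trans_of r hax hxy)
  obtain ⟨c, hc, rfl | ⟨hca, hrca⟩⟩ := exists_isRecordLow_le (r := r) (A := {m | ¬ r m x}) hax
  · exact absurd hc hx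
  · exact ⟨c, hca, hc, fun hcy => asymm hrca (hy.2 c hcy.1 hca)⟩

end RecordLow

/-- Every linear order `b` with domain a subset of ℕ embeds into the
Kleene–Brouwer ordering of the tree of finite strictly `b`-descending
sequences. -/
theorem embeds_into_KB_of_descending_tree (S : Set ℕ) (r : ↥S → ↥S → Prop)
    (hr : IsStrictTotalOrder ↥S r) :
    ∃ e : ↥S → {l : List ↥S // l.Pairwise (fun x y => r y x)},
      ∀ x y : ↥S, r x y → KBS S (e x).1 (e y).1 := by
  classical
  have := hr
  have hstable (x : ↥S) {N : ℕ} (hN : (x : ℕ) < N) :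
      recordLows r {m | ¬ r m x} (x + 1) = recordLows r {m | ¬ r m x} N :=
    (recordLows_eq_of_le hN fun a ha => Nat.lt_succ_of_le ha.le).symm
  refine ⟨fun x => ⟨recordLows r {m | ¬ r m x} (x + 1), pairwise_recordLows _ _⟩,
    fun x y hxy => ?_⟩
  have hN : (x : ℕ) < x + y + 1 ∧ (y : ℕ) < x + y + 1 := by omega
  dsimp only
  rw [hstable x hN.1, hstable y hN.2]
  refine KBS.filter_filter (pairwise_lt_enumBelow S _)
    ⟨x, mem_enumBelow.2 hN.1, isRecordLow_self x, fun h => h.1 hxy⟩ fun a ha hya hxa => ?_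
  obtain ⟨c, hca, hxc, hyc⟩ := exists_isRecordLow_lt_of_lt hxy hya hxa
  exact ⟨c, mem_enumBelow.2 ((Subtype.coe_lt_coe.2 hca).trans (mem_enumBelow.1 ha)), hca, hxc, hyc⟩
end

section
/- If x is a well-order and a, b are linear orders with domains in ℕ, and b is well-founded, then the Kleene–Brouwer ordering of the tree of attempts to simultaneously build an infinite descending sequence through b and an embedding of a into x is well-founded. -/
/-- Comparison of tree entries: first by the ℕ-value of the `b`-component,
then by the `x`-value of the second component. -/
def eLT {x : Type} [LinearOrder x] (B : Set ℕ) (p q : ↥B × WithBot x) : Prop :=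
  (p.1 : ℕ) < (q.1 : ℕ) ∨ ((p.1 : ℕ) = (q.1 : ℕ) ∧ p.2 < q.2)

/-- Kleene–Brouwer ordering on nodes of the tree of attempts. -/
def KBE {x : Type} [LinearOrder x] (B : Set ℕ)
    (s t : List (↥B × WithBot x)) : Prop :=
  ∃ n : ℕ, s.take n = t.take n ∧
    ((n = t.length ∧ n < s.length) ∨
      ∃ (h1 : n < s.length) (h2 : n < t.length),
        eLT B (s.get ⟨n, h1⟩) (t.get ⟨n, h2⟩))

/-- A node `(n, f, g)` of the tree of attempts: `f` is strictly `b`-descending,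
the second components are defined exactly on positions in `A`, and `g` is
order-preserving from `a ↾ n` into `x`. -/
def IsNode (A B : Set ℕ) (ra : ↥A → ↥A → Prop) (rb : ↥B → ↥B → Prop)
    {x : Type} [LinearOrder x] (l : List (↥B × WithBot x)) : Prop :=
  (∀ i j : Fin l.length, (i : ℕ) < (j : ℕ) → rb (l.get j).1 (l.get i).1) ∧
  (∀ i : Fin l.length, ((l.get i).2 = ⊥ ↔ (i : ℕ) ∉ A)) ∧
  (∀ (i j : Fin l.length) (hi : (i : ℕ) ∈ A) (hj : (j : ℕ) ∈ A),
    ra ⟨i, hi⟩ ⟨j, hj⟩ → (l.get i).2 < (l.get j).2)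

/- ### Auxiliary lemmas -/

lemma eLT_irrefl {x : Type} [LinearOrder x] (B : Set ℕ) (p : ↥B × WithBot x) :
    ¬ eLT B p p := by
  rintro (h | ⟨-, h⟩) <;> exact lt_irrefl _ h

lemma eLT_wf {x : Type} [LinearOrder x] (B : Set ℕ)
    (hx : WellFounded ((· < ·) : x → x → Prop)) :
    WellFounded (eLT B (x := x)) := by
  haveI : WellFoundedLT x := ⟨hx⟩
  have hwb : WellFounded ((· < ·) : WithBot x → WithBot x → Prop) := wellFounded_lt
  have hlex : WellFounded (Prod.Lex ((· < ·) : ℕ → ℕ → Prop)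
      ((· < ·) : WithBot x → WithBot x → Prop)) :=
    WellFounded.prod_lex (Nat.lt_wfRel.wf) hwb
  have h : WellFounded (InvImage (Prod.Lex ((· < ·) : ℕ → ℕ → Prop)
      ((· < ·) : WithBot x → WithBot x → Prop))
      (fun p : ↥B × WithBot x => ((p.1 : ℕ), p.2))) := InvImage.wf _ hlex
  refine Subrelation.wf ?_ h
  rintro p q (hlt | ⟨h1, h2⟩)
  · exact Prod.Lex.left _ _ hlt
  · dsimp [InvImage]
    rw [show ((p.1 : ℕ), p.2) = ((q.1 : ℕ), p.2) by rw [h1]]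
    exact Prod.Lex.right _ h2

lemma take_eq_get {α : Type*} {s t : List α} {n i : ℕ} (h : s.take n = t.take n)
    (hi : i < n) (h1 : i < s.length) (h2 : i < t.length) :
    s.get ⟨i, h1⟩ = t.get ⟨i, h2⟩ := by
  have hs : i < (s.take n).length := by simp [hi, h1]
  have ht : i < (t.take n).length := by simp [hi, h2]
  have hh := congrArg (fun l : List α => l[i]?) h
  simp only [List.getElem?_eq_getElem hs, List.getElem?_eq_getElem ht] at hh
  simpa [List.getElem_take] using hh

/-- Eventual constancy of a sequence that only steps down in a well-founded
relation or stays put. -/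
lemma eventually_const {α : Type*} {rel : α → α → Prop} (wf : WellFounded rel) :
    ∀ (a : α) (g : ℕ → α), g 0 = a →
      (∀ n, g (n + 1) = g n ∨ rel (g (n + 1)) (g n)) →
      ∃ n, ∀ m, n ≤ m → g m = g n := by
  intro a
  induction a using WellFounded.induction wf with
  | _ a ih =>
    intro g hg0 hstep
    by_cases hstrict : ∃ n, rel (g (n + 1)) (g n)
    · classical
      set n := Nat.find hstrict with hn
      have hconst : ∀ k, k ≤ n → g k = g 0 := by
        intro k hk
        induction k with
        | zero => rfl
        | succ k ihk =>
          have hk' : k < n := hk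
          rcases hstep k with h | h
          · rw [h]; exact ihk (le_of_lt hk')
          · exact absurd h (Nat.find_min hstrict hk')
      have hrel : rel (g (n + 1)) a := by
        rw [← hg0, ← hconst n le_rfl]
        exact Nat.find_spec hstrict
      obtain ⟨n', hn'⟩ := ih (g (n + 1)) hrel (fun i => g (n + 1 + i)) rfl
        (fun i => hstep (n + 1 + i))
      refine ⟨n + 1 + n', fun m hm => ?_⟩
      have hm' : m = n + 1 + (m - (n + 1)) := by omega
      rw [hm', hn' (m - (n + 1)) (by omega)]
    · push_neg at hstrict
      refine ⟨0, fun m _ => ?_⟩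
      induction m with
      | zero => rfl
      | succ m ihm =>
        rcases hstep m with h | h
        · rw [h, ihm (Nat.zero_le _)]
        · exact absurd h (hstrict m)

/-- Stabilization predicate: from stage `N` on, all lists have length at least
`K` and a common prefix of length `K`. -/
def Stable {E : Type*} (seq : ℕ → List E) (K N : ℕ) : Prop :=
  ∀ n, N ≤ n → K ≤ (seq n).length ∧ (seq n).take K = (seq N).take K

/-- If `x` is a well-order and `b` is well-founded, then the Kleene–Brouwer
ordering of the tree of attempts to simultaneously build an infinite descending
sequence through `b` and an embedding of `a` into `x` is well-founded. -/
theorem KB_of_attempt_tree_wellFounded (A B : Set ℕ) (ra : ↥A → ↥A → Prop)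
    (rb : ↥B → ↥B → Prop) (x : Type) [LinearOrder x]
    (hx : WellFounded ((· < ·) : x → x → Prop))
    (hb : ¬ ∃ s : ℕ → ↥B, ∀ n : ℕ, rb (s (n + 1)) (s n)) :
    ¬ ∃ seq : ℕ → List (↥B × WithBot x),
        (∀ n : ℕ, IsNode A B ra rb (seq n)) ∧
        ∀ n : ℕ, KBE B (seq (n + 1)) (seq n) := by
  rintro ⟨seq, hnode, hdesc⟩
  have ewf := eLT_wf B hx
  -- key step: stabilization propagates
  have key : ∀ K N, Stable seq K N → ∃ N', N ≤ N' ∧ Stable seq (K + 1) N' := by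
    intro K N hS
    -- common prefix of length K
    have htake : ∀ m n, N ≤ m → N ≤ n → (seq m).take K = (seq n).take K := by
      intro m n hm hn
      rw [(hS m hm).2, (hS n hn).2]
    -- first: from some point on lengths exceed K
    have hlen : ∃ N1, N ≤ N1 ∧ ∀ n, N1 ≤ n → K < (seq n).length := by
      by_cases hall : ∀ n, N ≤ n → K < (seq n).length
      · exact ⟨N, le_rfl, hall⟩
      · push_neg at hall
        obtain ⟨m, hm, hmlen⟩ := hall
        have hmK : (seq m).length = K := le_antisymm hmlen (hS m hm).1
        refine ⟨m + 1, by omega, ?_⟩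
        -- base: seq (m+1) has length > K
        have hbase : K < (seq (m + 1)).length := by
          obtain ⟨n₀, hpre, hcase⟩ := hdesc m
          rcases hcase with ⟨h1, h2⟩ | ⟨h1, h2, helt⟩
          · rw [hmK] at h1; omega
          · exfalso
            have hn₀ : n₀ < K := hmK ▸ h2
            have he := take_eq_get (htake (m + 1) m (by omega) hm) hn₀ h1 h2
            rw [he] at helt
            exact eLT_irrefl B _ helt
        -- step: length > K propagates
        have hind : ∀ j, K < (seq (m + 1 + j)).length := by
          intro j
          induction j with
          | zero => exact hbase
          | succ j ihj =>
            by_contra hle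
            push_neg at hle
            have hle' : (seq (m + 1 + j + 1)).length ≤ K := hle
            obtain ⟨n₀, hpre, hcase⟩ := hdesc (m + 1 + j)
            have hmj : N ≤ m + 1 + j := by omega
            have hmj1 : N ≤ m + 1 + j + 1 := by omega
            rcases hcase with ⟨h1, h2⟩ | ⟨h1, h2, helt⟩
            · omega
            · have hn₀ : n₀ < K := by
                have hx1 : n₀ < (seq (m + 1 + j + 1)).length := h1
                omega
              have he := take_eq_get (htake (m + 1 + j + 1) (m + 1 + j) hmj1 hmj)
                hn₀ h1 h2
              rw [he] at helt
              exact eLT_irrefl B _ helt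
        intro n hn
        have hn' : n = m + 1 + (n - (m + 1)) := by omega
        rw [hn']; exact hind _
    obtain ⟨N1, hNN1, hN1⟩ := hlen
    have hKlt : ∀ i : ℕ, K < (seq (N1 + i)).length :=
      fun i => hN1 _ (Nat.le_add_right _ _)
    -- entry at position K only moves down in eLT, or stays put
    have hgstep : ∀ i,
        (seq (N1 + (i + 1))).get ⟨K, hKlt (i + 1)⟩ =
          (seq (N1 + i)).get ⟨K, hKlt i⟩ ∨
        eLT B ((seq (N1 + (i + 1))).get ⟨K, hKlt (i + 1)⟩)
          ((seq (N1 + i)).get ⟨K, hKlt i⟩) := by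
      intro i
      obtain ⟨n₀, hpre, hcase⟩ := hdesc (N1 + i)
      have hls : K < (seq (N1 + i + 1)).length := hKlt (i + 1)
      have hlt : K < (seq (N1 + i)).length := hKlt i
      have htk : (seq (N1 + i + 1)).take K = (seq (N1 + i)).take K :=
        htake _ _ (by omega) (by omega)
      rcases hcase with ⟨h1, h2⟩ | ⟨h1, h2, helt⟩
      · left
        exact take_eq_get hpre (by omega) hls hlt
      · rcases lt_trichotomy n₀ K with hc | hc | hc
        · exfalso
          have he := take_eq_get htk hc h1 h2
          rw [he] at helt
          exact eLT_irrefl B _ helt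
        · subst hc
          exact Or.inr helt
        · left
          exact take_eq_get hpre hc hls hlt
    obtain ⟨n0, hn0⟩ := eventually_const ewf _
      (fun i => (seq (N1 + i)).get ⟨K, hKlt i⟩) rfl hgstep
    refine ⟨N1 + n0, by omega, ?_⟩
    intro n hn
    have hlnN1 : N1 ≤ n := by omega
    have hln : K < (seq n).length := hN1 n hlnN1
    refine ⟨by omega, ?_⟩
    -- entries at K agree (as optional lookups)
    have h1 := hn0 (n - N1) (by omega)
    have hopt : (seq (N1 + (n - N1)))[K]? = (seq (N1 + n0))[K]? := by
      rw [List.getElem?_eq_getElem (hKlt (n - N1)),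
        List.getElem?_eq_getElem (hKlt n0)]
      exact congrArg some h1
    have hopt' : (seq n)[K]? = (seq (N1 + n0))[K]? := by
      rw [show n = N1 + (n - N1) by omega]
      exact hopt
    rw [List.take_succ, List.take_succ,
      htake n (N1 + n0) (by omega) (by omega), hopt']
  -- build stabilization points for every K
  have exN : ∀ k : ℕ, ∃ N, Stable seq (k + 1) N := by
    intro k
    induction k with
    | zero =>
      obtain ⟨N', -, h⟩ := key 0 0 (fun n _ => ⟨Nat.zero_le _, by simp⟩)
      exact ⟨N', h⟩
    | succ k ihk =>
      obtain ⟨N, hN⟩ := ihk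
      obtain ⟨N', -, h⟩ := key (k + 1) N hN
      exact ⟨N', h⟩
  choose M hM using exN
  have hlenM : ∀ k, k < (seq (M k)).length := fun k => (hM k (M k) le_rfl).1
  apply hb
  refine ⟨fun k => ((seq (M k)).get ⟨k, hlenM k⟩).1, fun k => ?_⟩
  -- all lists far enough out agree with both stabilized prefixes
  have h1 : M k ≤ max (M k) (M (k + 1)) := le_max_left _ _
  have h2 : M (k + 1) ≤ max (M k) (M (k + 1)) := le_max_right _ _
  set n := max (M k) (M (k + 1)) with hn
  have hlen2 : k + 2 ≤ (seq n).length := (hM (k + 1) n h2).1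
  have htk : (seq n).take (k + 1) = (seq (M k)).take (k + 1) := (hM k n h1).2
  have htk1 : (seq n).take (k + 2) = (seq (M (k + 1))).take (k + 2) :=
    (hM (k + 1) n h2).2
  have hek : (seq n).get ⟨k, by omega⟩ = (seq (M k)).get ⟨k, hlenM k⟩ :=
    take_eq_get htk (by omega) (by omega) (hlenM k)
  have hek1 : (seq n).get ⟨k + 1, by omega⟩ =
      (seq (M (k + 1))).get ⟨k + 1, hlenM (k + 1)⟩ :=
    take_eq_get htk1 (by omega) (by omega) (hlenM (k + 1))
  have hrb := (hnode n).1 ⟨k, by omega⟩ ⟨k + 1, by omega⟩ (Nat.lt_succ_self k)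
  rw [hek, hek1] at hrb
  exact hrb
end
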